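/- In the concurrent graph sharing game without the distinct-subset-sums assumption, where ties (both players having equal collected weight) are resolved by a fixed arbitrary tie-breaking rule determining which player takes the next vertex, the first player can still guarantee to take vertices of total weight at least 1/3 on every instance (G,w). -/

import Mathlib

/-!
The concurrent graph sharing game **without** the distinct-subset-sums
assumption.  Histories are lists of the taken vertices, most recent first.
The player to move at a history is determined as follows: at the empty history
1st moves (1st begins by taking any vertex); afterwards the player with the
strictly smaller collected weight moves, and if both players' collected weights
are equal, a fixed arbitrary tie-breaking rule `tb` (a function of the history,
returning `true` iff 1st is to move) decides.
-/

namespace ConcurrentSharingTB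

variable {V : Type} [Fintype V]

/-- The pair `(w(F), w(S))` of weights collected by the two players along a
history (most recent vertex first), under the tie-breaking rule `tb`:
each vertex is assigned to the player who was to move, namely 1st iff his
collected weight was strictly smaller, or the history was empty, or on a tie
the rule `tb` selected 1st. -/
noncomputable def scores (w : V → ℝ) (tb : List V → Bool) : List V → ℝ × ℝ
  | [] => (0, 0)
  | v :: h =>
    let p := scores w tb h
    if p.1 < p.2 ∨ (p.1 = p.2 ∧ (h.isEmpty || tb h) = true) then
      (p.1 + w v, p.2)
    else
      (p.1, p.2 + w v)

/-- `v` is a legal next move at history `h`: it is not yet taken, and it is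
adjacent to some taken vertex (any vertex is legal at the start). -/
def LegalMove (G : SimpleGraph V) (h : List V) (v : V) : Prop :=
  v ∉ h ∧ (h = [] ∨ ∃ u ∈ h, G.Adj u v)

/-- A strategy (for either player) maps histories to vertices; it is legal if
it produces a legal move whenever a legal move exists. -/
def LegalStrategy (G : SimpleGraph V) (σ : List V → V) : Prop :=
  ∀ h : List V, (∃ v, LegalMove G h v) → LegalMove G h (σ h)

/-- The history after `n` rounds when 1st plays `σ` and 2nd plays `τ`, under
the tie-breaking rule `tb`. -/
noncomputable def playAux (w : V → ℝ) (tb : List V → Bool)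
    (σ τ : List V → V) : ℕ → List V
  | 0 => []
  | n + 1 =>
    let h := playAux w tb σ τ n
    (if (scores w tb h).1 < (scores w tb h).2 ∨
        ((scores w tb h).1 = (scores w tb h).2 ∧ (h.isEmpty || tb h) = true)
     then σ h else τ h) :: h

/-- The total weight `w(F)` collected by 1st at the end of the complete play
(all vertices taken) in which 1st plays `σ` and 2nd plays `τ`, under the
tie-breaking rule `tb`. -/
noncomputable def firstScore (w : V → ℝ) (tb : List V → Bool)
    (σ τ : List V → V) : ℝ :=
  (scores w tb (playAux w tb σ τ (Fintype.card V))).1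

end ConcurrentSharingTB

/-!
1st opens with a vertex `m` of maximal weight and afterwards plays any legal move. Whenever 2nd
moves, his collected weight is at most 1st's, so it exceeds 1st's by at most `w m` after the
move; hence `w(S) ≤ w(F) + w m` throughout the game. Since `w m ≤ w(F)` and `w(F) + w(S) = 1`,
this gives `1 ≤ 3 w(F)`.
-/

namespace ConcurrentSharingTB

variable {V : Type}

section Scores

variable (w : V → ℝ) (tb : List V → Bool)

lemma fst_scores_add_snd_scores (h : List V) :
    (scores w tb h).1 + (scores w tb h).2 = (h.map w).sum := by
  induction h with
  | nil => simp [scores]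
  | cons v h ih =>
    simp only [scores, List.map_cons, List.sum_cons]
    split <;> dsimp only <;> linarith

variable {w}

lemma fst_scores_le_fst_scores_cons (hw : ∀ v, 0 ≤ w v) (v : V) (h : List V) :
    (scores w tb h).1 ≤ (scores w tb (v :: h)).1 := by
  simp only [scores]
  split
  · exact le_add_of_nonneg_right (hw v)
  · exact le_rfl

lemma le_fst_scores_append_singleton (hw : ∀ v, 0 ≤ w v) (v : V) (h : List V) :
    w v ≤ (scores w tb (h ++ [v])).1 := by
  induction h with
  | nil => simp [scores]
  | cons u h ih => exact ih.trans (fst_scores_le_fst_scores_cons tb hw u _)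

/-- 2nd only moves when he is not behind, so he is never ahead by more than a maximal weight. -/
lemma snd_scores_le_fst_scores_add (hw : ∀ v, 0 ≤ w v) {m : V} (hm : ∀ v, w v ≤ w m)
    (h : List V) : (scores w tb h).2 ≤ (scores w tb h).1 + w m := by
  induction h with
  | nil => simpa [scores] using hw m
  | cons v h ih =>
    simp only [scores]
    split
    · dsimp only
      linarith [hw v]
    · next hnot =>
      have hbehind : (scores w tb h).2 ≤ (scores w tb h).1 := not_lt.mp (not_or.mp hnot).1
      dsimp only
      linarith [hm v]

end Scores

lemma exists_legalMove {G : SimpleGraph V} (hconn : G.Connected) {h : List V}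
    (hfree : ∃ v, v ∉ h) : ∃ v, LegalMove G h v := by
  obtain ⟨x, hx⟩ := hfree
  cases h with
  | nil => exact ⟨x, hx, Or.inl rfl⟩
  | cons u t =>
    obtain ⟨d, -, hd, hd'⟩ :=
      (hconn.preconnected u x).some.exists_boundary_dart {y | y ∈ u :: t} List.mem_cons_self hx
    exact ⟨d.snd, hd', Or.inr ⟨d.fst, hd, d.adj⟩⟩

noncomputable def openingAt (G : SimpleGraph V) (m : V) (h : List V) : V :=
  open Classical in
  if h = [] then m else if hl : ∃ v, LegalMove G h v then hl.choose else m

lemma openingAt_nil (G : SimpleGraph V) (m : V) : openingAt G m [] = m := by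
  simp [openingAt]

lemma legalStrategy_openingAt (G : SimpleGraph V) (m : V) :
    LegalStrategy G (openingAt G m) := by
  intro h hl
  by_cases hh : h = []
  · subst hh
    rw [openingAt_nil]
    exact ⟨List.not_mem_nil, Or.inl rfl⟩
  · simpa [openingAt, hh, hl] using hl.choose_spec

section Play

variable (w : V → ℝ) (tb : List V → Bool) (σ τ : List V → V)

@[simp]
lemma length_playAux (n : ℕ) : (playAux w tb σ τ n).length = n := by
  induction n with
  | zero => rfl
  | succ n ih => simp [playAux, ih]

lemma playAux_eq_append_opening {n : ℕ} (hn : 0 < n) :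
    ∃ l, playAux w tb σ τ n = l ++ [σ []] := by
  induction n with
  | zero => exact absurd hn (lt_irrefl 0)
  | succ n ih =>
    rcases n.eq_zero_or_pos with rfl | hpos
    · exact ⟨[], by simp [playAux, scores]⟩
    · obtain ⟨l, hl⟩ := ih hpos
      exact ⟨_ :: l, by rw [playAux, hl]; rfl⟩

lemma nodup_playAux [Fintype V] {G : SimpleGraph V} (hconn : G.Connected)
    (hσ : LegalStrategy G σ) (hτ : LegalStrategy G τ) {n : ℕ} (hn : n ≤ Fintype.card V) :
    (playAux w tb σ τ n).Nodup := by
  induction n with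
  | zero => exact List.nodup_nil
  | succ n ih =>
    have hfree : ∃ v, v ∉ playAux w tb σ τ n :=
      Cardinal.exists_notMem_of_length_lt _ (by simpa using hn)
    have hlegal := exists_legalMove hconn hfree
    rw [playAux, List.nodup_cons]
    refine ⟨?_, ih (Nat.le_of_succ_le hn)⟩
    split
    · exact (hσ _ hlegal).1
    · exact (hτ _ hlegal).1

lemma sum_map_playAux_card [Fintype V] {G : SimpleGraph V} (hconn : G.Connected)
    (hσ : LegalStrategy G σ) (hτ : LegalStrategy G τ) :
    ((playAux w tb σ τ (Fintype.card V)).map w).sum = ∑ v, w v := by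
  classical
  have hnd := nodup_playAux w tb σ τ hconn hσ hτ le_rfl
  have huniv : (playAux w tb σ τ (Fintype.card V)).toFinset = Finset.univ :=
    Finset.eq_univ_of_card _ (by rw [List.toFinset_card_of_nodup hnd, length_playAux])
  rw [← List.sum_toFinset w hnd, huniv]

end Play

end ConcurrentSharingTB

open ConcurrentSharingTB in
/-- In the concurrent graph sharing game without the
distinct-subset-sums assumption, where ties are resolved by a fixed arbitrary
tie-breaking rule `tb`, the first player can still guarantee to take vertices
of total weight at least `1/3` on every instance `(G,w)` (a finite connected
graph with weights in `(0,1]` summing to `1`). -/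
theorem first_player_guarantees_one_third_ties {V : Type} [Fintype V]
    (G : SimpleGraph V) (w : V → ℝ) (tb : List V → Bool)
    (hconn : G.Connected) (hw : ∀ v : V, 0 < w v ∧ w v ≤ 1)
    (hsum : (∑ v : V, w v) = 1) :
    ∃ σ : List V → V, LegalStrategy G σ ∧
      ∀ τ : List V → V, LegalStrategy G τ →
        1 / 3 ≤ firstScore w tb σ τ := by
  have : Nonempty V := hconn.nonempty
  have hw0 : ∀ v, 0 ≤ w v := fun v => (hw v).1.le
  obtain ⟨m, hm⟩ := Finite.exists_max w
  refine ⟨openingAt G m, legalStrategy_openingAt G m, fun τ hτ => ?_⟩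
  set h := playAux w tb (openingAt G m) τ (Fintype.card V) with h_def
  have htotal : (scores w tb h).1 + (scores w tb h).2 = 1 := by
    rw [fst_scores_add_snd_scores, sum_map_playAux_card w tb _ τ hconn
      (legalStrategy_openingAt G m) hτ, hsum]
  have hsnd := snd_scores_le_fst_scores_add tb hw0 hm h
  have hfst : w m ≤ (scores w tb h).1 := by
    obtain ⟨l, hl⟩ := playAux_eq_append_opening w tb (openingAt G m) τ (Fintype.card_pos (α := V))
    rw [h_def, hl, openingAt_nil]
    exact le_fst_scores_append_singleton tb hw0 m l
  change 1 / 3 ≤ (scores w tb h).1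
  linarith
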